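/- arXiv:1401.2335 — 6 statements merged into one kernel-verified Lean document; each statement's English description precedes it below -/
import Mathlib

section
/- For every natural number n ≥ 0, there exists a unique binary operation * on the set {1, …, 2^n} satisfying x * 1 = x + 1 for x < 2^n, 2^n * 1 = 1, and x * (y * 1) = (x * y) * (x * 1) for all x, y in {1, …, 2^n}; moreover, this operation obeys the left-selfdistributivity law x * (y * z) = (x * y) * (x * z) for all x, y, z in {1, …, 2^n}. -/
/-- `op` is the Laver table operation on `{1, …, 2^n}`: it maps the set to itself,
satisfies `x * 1 = x + 1` for `x < 2^n`, `2^n * 1 = 1`, and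
`x * (y * 1) = (x * y) * (x * 1)`. -/
def IsLaverOp (n : ℕ) (op : ℕ → ℕ → ℕ) : Prop :=
  (∀ x y, 1 ≤ x → x ≤ 2 ^ n → 1 ≤ y → y ≤ 2 ^ n → 1 ≤ op x y ∧ op x y ≤ 2 ^ n) ∧
  (∀ x, 1 ≤ x → x < 2 ^ n → op x 1 = x + 1) ∧
  (op (2 ^ n) 1 = 1) ∧
  (∀ x y, 1 ≤ x → x ≤ 2 ^ n → 1 ≤ y → y ≤ 2 ^ n → op x (op y 1) = op (op x y) (op x 1))

/-!
Row `x < N` of the table is generated by `x * (y + 1) = (x * y) * (x + 1)` from `x * 0 = N`: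
it increases strictly until it reaches `N` and then repeats, so `x * y = N` exactly when the
period of the row divides `y`. Everything hinges on `x * N = N`, i.e. on every period dividing
`N`: granted this, left self-distributivity follows by induction along the recursion, and
uniqueness because the recursion is forced by `x * (y * 1) = (x * y) * (x * 1)`.

For `N = 2 * M`, reduction modulo `M` maps the table of size `2 * M` homomorphically onto
that of size `M`. Hence the entries of row `x` divisible by `M` sit exactly at the multiples
of the period `q ∣ M` of the image row. Within one period row `x` increases strictly, and only
`M` and `2 * M` are available, so its period is `q` or `2 * q`, a divisor of `2 * M`.
-/

-- `max` is redundant (`x < laver N x y`) and only makes the recursion visibly well founded.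
def laver (N x y : ℕ) : ℕ :=
  if _ : N ≤ x then y
  else match y with
    | 0 => N
    | y + 1 => laver N (max (x + 1) (laver N x y)) (x + 1)
termination_by (N - x, y)
decreasing_by
  · exact Prod.Lex.right _ (Nat.lt_succ_self y)
  · exact Prod.Lex.left _ _ (by omega)

section Rows

variable {N x : ℕ}

theorem laver_of_le (hx : N ≤ x) (y : ℕ) : laver N x y = y := by
  rw [laver.eq_def, dif_pos hx]

theorem laver_zero (hx : x < N) : laver N x 0 = N := by
  rw [laver.eq_def, dif_neg (not_le.2 hx)]

theorem laver_succ_max (hx : x < N) (y : ℕ) :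
    laver N x (y + 1) = laver N (max (x + 1) (laver N x y)) (x + 1) := by
  rw [laver.eq_def, dif_neg (not_le.2 hx)]

theorem lt_laver_and_laver_le {N x : ℕ} (hx : x < N) (y : ℕ) :
    x < laver N x y ∧ laver N x y ≤ N := by
  cases y with
  | zero => rw [laver_zero hx]; omega
  | succ y =>
    have ih := lt_laver_and_laver_le hx y
    rw [laver_succ_max hx, max_eq_right ih.1]
    rcases ih.2.lt_or_eq with hlt | heq
    · have := lt_laver_and_laver_le (x := laver N x y) hlt (x + 1)
      omega
    · rw [heq, laver_of_le le_rfl]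
      omega
termination_by (N - x, y)

theorem laver_succ (hx : x < N) (y : ℕ) :
    laver N x (y + 1) = laver N (laver N x y) (x + 1) := by
  rw [laver_succ_max hx, max_eq_right (lt_laver_and_laver_le hx y).1]

theorem laver_one (hx : x < N) : laver N x 1 = x + 1 := by
  rw [laver_succ hx, laver_zero hx, laver_of_le le_rfl]

theorem laver_lt_laver_succ (hx : x < N) {y : ℕ} (hy : laver N x y < N) :
    laver N x y < laver N x (y + 1) := by
  rw [laver_succ hx]
  exact (lt_laver_and_laver_le hy _).1

theorem exists_pos_laver_eq (hx : x < N) : ∃ t, 0 < t ∧ laver N x t = N := by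
  by_contra! h
  have hlt : ∀ t, 0 < t → laver N x t < N := fun t ht =>
    lt_of_le_of_ne (lt_laver_and_laver_le hx t).2 (h t ht)
  have hgrow : ∀ t, x + t + 1 ≤ laver N x (t + 1) := by
    intro t
    induction t with
    | zero => rw [laver_one hx]
    | succ t ih =>
      have := laver_lt_laver_succ hx (hlt (t + 1) t.succ_pos)
      omega
  have := hlt (N + 1) N.succ_pos
  have := hgrow N
  omega

noncomputable def laverPeriod (N x : ℕ) : ℕ := sInf {t | 0 < t ∧ laver N x t = N}

theorem laverPeriod_pos (hx : x < N) : 0 < laverPeriod N x :=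
  (Nat.sInf_mem (exists_pos_laver_eq hx)).1

theorem laver_laverPeriod (hx : x < N) : laver N x (laverPeriod N x) = N :=
  (Nat.sInf_mem (exists_pos_laver_eq hx)).2

theorem laver_periodic (hx : x < N) : Function.Periodic (laver N x) (laverPeriod N x) := by
  intro y
  induction y with
  | zero => rw [zero_add, laver_laverPeriod hx, laver_zero hx]
  | succ y ih => rw [add_right_comm, laver_succ hx, ih, laver_succ hx]

theorem laver_eq_iff_laverPeriod_dvd (hx : x < N) {y : ℕ} :
    laver N x y = N ↔ laverPeriod N x ∣ y := by
  constructor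
  · intro hy
    rw [← (laver_periodic hx).map_mod_nat] at hy
    refine Nat.dvd_of_mod_eq_zero (Nat.eq_zero_of_not_pos fun hr => ?_)
    exact (Nat.mod_lt y (laverPeriod_pos hx)).not_ge (Nat.sInf_le ⟨hr, hy⟩)
  · rintro ⟨k, rfl⟩
    rw [mul_comm, ← Nat.cast_id k, (laver_periodic hx).nat_mul_eq, laver_zero hx]

theorem laver_lt_of_lt_laverPeriod (hx : x < N) {y : ℕ} (hy : 0 < y)
    (hyp : y < laverPeriod N x) : laver N x y < N :=
  lt_of_le_of_ne (lt_laver_and_laver_le hx y).2 fun h =>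
    hyp.not_ge (Nat.le_of_dvd hy ((laver_eq_iff_laverPeriod_dvd hx).1 h))

theorem laver_lt_laver (hx : x < N) {y y' : ℕ} (hy : 0 < y) (hyy' : y < y')
    (hy' : y' < laverPeriod N x) : laver N x y < laver N x y' := by
  induction y', hyy' using Nat.le_induction with
  | base => exact laver_lt_laver_succ hx (laver_lt_of_lt_laverPeriod hx hy (by omega))
  | succ z hz ih =>
    exact (ih (by omega)).trans
      (laver_lt_laver_succ hx (laver_lt_of_lt_laverPeriod hx (by omega) (by omega)))

end Rows

theorem laver_ld_one {N : ℕ} (hcol : ∀ a, 1 ≤ a → a ≤ N → laver N a N = N) {a b : ℕ}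
    (ha : 1 ≤ a) (haN : a ≤ N) (hbN : b ≤ N) :
    laver N a (laver N b 1) = laver N (laver N a b) (laver N a 1) := by
  rcases haN.lt_or_eq with haN | rfl
  · rw [laver_one haN]
    rcases hbN.lt_or_eq with hbN | rfl
    · rw [laver_one hbN, laver_succ haN]
    · rw [laver_of_le le_rfl, hcol a ha haN.le, laver_of_le le_rfl, laver_one haN]
  · simp only [laver_of_le le_rfl]

/-- The representative of `a` modulo `M` in `{1, …, M}`. -/
def modIcc (M a : ℕ) : ℕ := (a + (M - 1)) % M + 1

section ModIcc

variable {M : ℕ}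

theorem modIcc_pos (a : ℕ) : 0 < modIcc M a := Nat.succ_pos _

theorem modIcc_le (hM : 0 < M) (a : ℕ) : modIcc M a ≤ M := Nat.mod_lt _ hM

theorem modIcc_modEq (hM : 0 < M) (a : ℕ) : modIcc M a ≡ a [MOD M] := by
  unfold modIcc
  calc (a + (M - 1)) % M + 1 ≡ a + (M - 1) + 1 [MOD M] := (Nat.mod_modEq _ _).add_right 1
    _ = a + M := by omega
    _ ≡ a [MOD M] := Nat.add_modEq_right

theorem modIcc_eq_of_modEq {a c : ℕ} (hc : 0 < c) (hcM : c ≤ M) (h : c ≡ a [MOD M]) :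
    modIcc M a = c := by
  have h' : (c + (M - 1)) % M = (a + (M - 1)) % M := h.add_right _
  unfold modIcc
  rw [← h', show c + (M - 1) = c - 1 + M by omega, Nat.add_mod_right,
    Nat.mod_eq_of_lt (by omega)]
  omega

theorem dvd_modIcc_iff {q : ℕ} (hM : 0 < M) (hq : q ∣ M) (a : ℕ) : q ∣ modIcc M a ↔ q ∣ a :=
  (modIcc_modEq hM a).dvd_iff hq

theorem modIcc_eq_self_iff (hM : 0 < M) (a : ℕ) : modIcc M a = M ↔ M ∣ a := by
  refine ⟨fun h => (dvd_modIcc_iff hM dvd_rfl a).1 (by rw [h]), fun h => ?_⟩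
  exact modIcc_eq_of_modEq hM le_rfl
    ((Nat.modEq_zero_iff_dvd.2 dvd_rfl).trans (Nat.modEq_zero_iff_dvd.2 h).symm)

theorem laver_modIcc_one (hM : 0 < M) (a : ℕ) : laver M (modIcc M a) 1 = modIcc M (a + 1) := by
  rcases (modIcc_le hM a).lt_or_eq with ha | ha
  · rw [laver_one ha]
    exact (modIcc_eq_of_modEq (by omega) ha ((modIcc_modEq hM a).add_right 1)).symm
  · rw [ha, laver_of_le le_rfl]
    refine (modIcc_eq_of_modEq one_pos hM ?_).symm
    have := Nat.modEq_zero_iff_dvd.2 ((modIcc_eq_self_iff hM a).1 ha)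
    simpa using (this.add_right 1).symm

theorem modIcc_laver_two_mul (hM : 0 < M) (hcol : ∀ a, 1 ≤ a → a ≤ M → laver M a M = M)
    {x : ℕ} (hx1 : 1 ≤ x) (hx : x ≤ 2 * M) (y : ℕ) :
    modIcc M (laver (2 * M) x y) = laver M (modIcc M x) (modIcc M y) := by
  have htop : modIcc M (2 * M) = M := (modIcc_eq_self_iff hM _).2 (dvd_mul_left M 2)
  rcases hx.lt_or_eq with hx | rfl
  · cases y with
    | zero =>
      rw [laver_zero hx, htop, (modIcc_eq_self_iff hM 0).2 (dvd_zero M),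
        hcol _ (modIcc_pos x) (modIcc_le hM x)]
    | succ y =>
      have hxy := lt_laver_and_laver_le hx y
      rw [laver_succ hx, modIcc_laver_two_mul hM hcol (x := laver (2 * M) x y) (by omega) hxy.2,
        modIcc_laver_two_mul hM hcol hx1 hx.le y, ← laver_modIcc_one hM x,
        ← laver_modIcc_one hM y, laver_ld_one hcol (modIcc_pos x) (modIcc_le hM x) (modIcc_le hM y)]
  · rw [laver_of_le le_rfl, htop, laver_of_le le_rfl]
termination_by (2 * M - x, y)

theorem exists_dvd_laver_modIcc_eq_iff {a : ℕ} (hM : 0 < M) (haM : a ≤ M)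
    (hcol : laver M a M = M) : ∃ q, q ∣ M ∧ ∀ y, laver M a (modIcc M y) = M ↔ q ∣ y := by
  rcases haM.lt_or_eq with haM | rfl
  · have hqM := (laver_eq_iff_laverPeriod_dvd haM).1 hcol
    exact ⟨laverPeriod M a, hqM, fun y => by
      rw [laver_eq_iff_laverPeriod_dvd haM, dvd_modIcc_iff hM hqM]⟩
  · exact ⟨a, dvd_rfl, fun y => by rw [laver_of_le le_rfl, modIcc_eq_self_iff hM]⟩

end ModIcc

theorem laver_two_mul_self {M : ℕ} (hM : 0 < M)
    (hcol : ∀ a, 1 ≤ a → a ≤ M → laver M a M = M) {x : ℕ} (hx1 : 1 ≤ x) (hx : x ≤ 2 * M) :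
    laver (2 * M) x (2 * M) = 2 * M := by
  rcases hx.lt_or_eq with hx | rfl
  swap
  · exact laver_of_le le_rfl _
  obtain ⟨q, hqM, hq⟩ := exists_dvd_laver_modIcc_eq_iff hM (modIcc_le hM x)
    (hcol _ (modIcc_pos x) (modIcc_le hM x))
  have hrow : ∀ y, M ∣ laver (2 * M) x y ↔ q ∣ y := fun y => by
    rw [← modIcc_eq_self_iff hM, modIcc_laver_two_mul hM hcol hx1 hx.le, hq]
  obtain ⟨k, hk⟩ : q ∣ laverPeriod (2 * M) x :=
    (hrow _).1 (by rw [laver_laverPeriod hx]; exact dvd_mul_left M 2)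
  have hq : 0 < q := Nat.pos_of_ne_zero fun h => (laverPeriod_pos hx).ne' (by simp [hk, h])
  have hmid : ∀ y, 0 < y → y < laverPeriod (2 * M) x → q ∣ y → laver (2 * M) x y = M :=
    fun y hy hyp hqy => Nat.eq_of_dvd_of_lt_two_mul
      (lt_laver_and_laver_le hx y).1.ne_bot ((hrow y).2 hqy) (laver_lt_of_lt_laverPeriod hx hy hyp)
  have hk2 : k ≤ 2 := by
    by_contra! hk3
    have h2q : 2 * q < laverPeriod (2 * M) x := by rw [hk]; nlinarith
    have := laver_lt_laver hx hq (by omega : q < 2 * q) h2q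
    rw [hmid q hq (by omega) dvd_rfl, hmid (2 * q) (by omega) h2q (dvd_mul_left q 2)] at this
    exact this.false
  have hp2q : laverPeriod (2 * M) x ∣ 2 * q := by
    interval_cases k
    · exact absurd hk (laverPeriod_pos hx).ne'
    · exact ⟨2, by rw [hk]; ring⟩
    · exact ⟨1, by rw [hk]; ring⟩
  exact (laver_eq_iff_laverPeriod_dvd hx).2 (hp2q.trans (mul_dvd_mul_left 2 hqM))

theorem laver_two_pow_self (n : ℕ) :
    ∀ x, 1 ≤ x → x ≤ 2 ^ n → laver (2 ^ n) x (2 ^ n) = 2 ^ n := by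
  induction n with
  | zero =>
    intro x hx1 hx
    obtain rfl : x = 2 ^ 0 := le_antisymm hx (by simpa using hx1)
    exact laver_of_le le_rfl _
  | succ n ih =>
    rw [pow_succ']
    exact fun x hx1 hx => laver_two_mul_self (Nat.two_pow_pos n) ih hx1 hx

theorem laver_ld {N : ℕ} (hcol : ∀ a, 1 ≤ a → a ≤ N → laver N a N = N) {x y : ℕ} (hx1 : 1 ≤ x)
    (hxN : x ≤ N) (hyN : y ≤ N) (z : ℕ) :
    laver N x (laver N y z) = laver N (laver N x y) (laver N x z) := by
  rcases hxN.lt_or_eq with hx | rfl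
  swap
  · simp only [laver_of_le le_rfl]
  have hxy := lt_laver_and_laver_le hx y
  rcases hyN.lt_or_eq with hy | rfl
  swap
  · rw [laver_of_le le_rfl, hcol x hx1 hxN, laver_of_le le_rfl]
  cases z with
  | zero => rw [laver_zero hy, laver_zero hx, hcol x hx1 hxN, hcol _ (by omega) hxy.2]
  | succ z =>
    have hyz := lt_laver_and_laver_le hy z
    rw [laver_succ hy, laver_ld hcol hx1 hxN (y := laver N y z) hyz.2,
      laver_ld hcol hx1 hxN hyN z, laver_succ hx y,
      ← laver_ld hcol (x := laver N x y) (by omega) hxy.2 (lt_laver_and_laver_le hx z).2,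
      ← laver_succ hx z]
termination_by (N - x, N - y, z)

theorem eq_laver_of_one_of_ld_one {N : ℕ} {op : ℕ → ℕ → ℕ}
    (hone : ∀ x, 1 ≤ x → x < N → op x 1 = x + 1) (htop : op N 1 = 1)
    (hld : ∀ x y, 1 ≤ x → x ≤ N → 1 ≤ y → y ≤ N → op x (op y 1) = op (op x y) (op x 1))
    {x y : ℕ} (hx1 : 1 ≤ x) (hxN : x ≤ N) (hy1 : 1 ≤ y) (hyN : y ≤ N) :
    op x y = laver N x y := by
  obtain ⟨z, rfl⟩ : ∃ z, y = z + 1 := ⟨y - 1, by omega⟩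
  rcases Nat.eq_zero_or_pos z with rfl | hz
  · rcases hxN.lt_or_eq with hx | rfl
    · rw [hone x hx1 hx, laver_one hx]
    · rw [htop, laver_of_le le_rfl]
  have hunfold : op x (z + 1) = op (laver N x z) (op x 1) := by
    rw [← hone z hz (by omega), hld x z hx1 hxN hz (by omega),
      eq_laver_of_one_of_ld_one hone htop hld hx1 hxN hz (by omega)]
  rcases hxN.lt_or_eq with hx | rfl
  · have hxz := lt_laver_and_laver_le hx z
    rw [hunfold, hone x hx1 hx, laver_succ hx,
      eq_laver_of_one_of_ld_one hone htop hld (x := laver N x z) (by omega) hxz.2 (by omega) hx]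
  · rw [hunfold, htop, laver_of_le le_rfl, hone z hz (by omega), laver_of_le le_rfl]
termination_by (N - x, y)

theorem isLaverOp_laver (n : ℕ) : IsLaverOp n (laver (2 ^ n)) := by
  refine ⟨fun x y hx1 hxN hy1 hyN => ?_, fun x _ hx => laver_one hx, laver_of_le le_rfl 1,
    fun x y hx1 hxN _ hyN => laver_ld_one (laver_two_pow_self n) hx1 hxN hyN⟩
  rcases hxN.lt_or_eq with hx | rfl
  · have := lt_laver_and_laver_le hx y
    omega
  · rw [laver_of_le le_rfl]
    exact ⟨hy1, hyN⟩

theorem laver_exists_unique_and_selfdistributive (n : ℕ) :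
    ∃ op : ℕ → ℕ → ℕ, IsLaverOp n op ∧
      (∀ op' : ℕ → ℕ → ℕ, IsLaverOp n op' →
        ∀ x y, 1 ≤ x → x ≤ 2 ^ n → 1 ≤ y → y ≤ 2 ^ n → op' x y = op x y) ∧
      (∀ x y z, 1 ≤ x → x ≤ 2 ^ n → 1 ≤ y → y ≤ 2 ^ n → 1 ≤ z → z ≤ 2 ^ n →
        op x (op y z) = op (op x y) (op x z)) := by
  refine ⟨laver (2 ^ n), isLaverOp_laver n, ?_, ?_⟩
  · rintro op ⟨-, hone, htop, hld⟩ x y hx1 hxN hy1 hyN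
    exact eq_laver_of_one_of_ld_one hone htop hld hx1 hxN hy1 hyN
  · intro x y z hx1 hxN _ hyN _ _
    exact laver_ld (laver_two_pow_self n) hx1 hxN hyN z
end

section
/- For every n ≥ 0 and every p in {1, …, 2^n}, there exists a natural number r with 2^r ≤ 2^n such that p *_n 1 < p *_n 2 < ⋯ < p *_n 2^r = 2^n, and the row of p is periodic with period 2^r: for all q in {1, …, 2^n}, p *_n q = p *_n q', where q' is the unique element of {1, …, 2^r} congruent to q modulo 2^r. -/
noncomputable def rowPeriod (n : ℕ) (op : ℕ → ℕ → ℕ) (p : ℕ) : ℕ :=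
  sInf {d | 1 ≤ d ∧ op p d = 2 ^ n}

namespace IsLaverOp

variable {n : ℕ} {op : ℕ → ℕ → ℕ} {p q : ℕ}

theorem op_le (h : IsLaverOp n op) (hp1 : 1 ≤ p) (hp : p ≤ 2 ^ n) (hq1 : 1 ≤ q)
    (hq : q ≤ 2 ^ n) : op p q ≤ 2 ^ n :=
  (h.1 p q hp1 hp hq1 hq).2

theorem op_one (h : IsLaverOp n op) (hp1 : 1 ≤ p) (hp : p < 2 ^ n) : op p 1 = p + 1 :=
  h.2.1 p hp1 hp

theorem top_op (h : IsLaverOp n op) (hq1 : 1 ≤ q) (hq : q ≤ 2 ^ n) : op (2 ^ n) q = q := by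
  induction q, hq1 using Nat.le_induction with
  | base => exact h.2.2.1
  | succ q hq1 ih =>
    have hdistrib := h.2.2.2 (2 ^ n) q Nat.one_le_two_pow le_rfl hq1 (by omega)
    rwa [h.op_one hq1 (by omega), ih (by omega), h.2.2.1, h.op_one hq1 (by omega)] at hdistrib

theorem op_succ (h : IsLaverOp n op) (hp1 : 1 ≤ p) (hp : p < 2 ^ n) (hq1 : 1 ≤ q)
    (hq : q < 2 ^ n) : op p (q + 1) = op (op p q) (p + 1) := by
  have hdistrib := h.2.2.2 p q hp1 hp.le hq1 hq.le
  rwa [h.op_one hq1 hq, h.op_one hp1 hp] at hdistrib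

theorem lt_op (h : IsLaverOp n op) (hp1 : 1 ≤ p) (hp : p < 2 ^ n) (hq1 : 1 ≤ q)
    (hq : q ≤ 2 ^ n) : p < op p q := by
  induction hk : 2 ^ n - p using Nat.strong_induction_on generalizing p q with
  | _ k ih =>
  induction q, hq1 using Nat.le_induction with
  | base => rw [h.op_one hp1 hp]; omega
  | succ q hq1 ihq =>
    have hpb := ihq (by omega)
    rw [h.op_succ hp1 hp hq1 (by omega)]
    rcases (h.op_le hp1 hp.le hq1 (by omega)).eq_or_lt with hb | hb
    · rw [hb, h.top_op (by omega) (by omega)]; omega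
    · exact hpb.trans (ih _ (by omega) (by omega) hb (by omega) (by omega) rfl)

theorem op_lt_op_succ (h : IsLaverOp n op) (hp1 : 1 ≤ p) (hp : p ≤ 2 ^ n) (hq1 : 1 ≤ q)
    (hq : q < 2 ^ n) (hpq : op p q < 2 ^ n) : op p q < op p (q + 1) := by
  rcases hp.eq_or_lt with rfl | hp
  · rw [h.top_op hq1 hq.le, h.top_op (by omega) hq]; omega
  · have hpb := h.lt_op hp1 hp hq1 hq.le
    rw [h.op_succ hp1 hp hq1 hq]
    exact h.lt_op (by omega) hpq (by omega) (by omega)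

theorem op_top (h : IsLaverOp n op) (hp1 : 1 ≤ p) (hp : p ≤ 2 ^ n) : op p (2 ^ n) = 2 ^ n := by
  rcases hp.eq_or_lt with rfl | hp
  · exact h.top_op Nat.one_le_two_pow le_rfl
  have hpb := h.lt_op hp1 hp Nat.one_le_two_pow le_rfl
  refine (h.op_le hp1 hp.le Nat.one_le_two_pow le_rfl).eq_or_lt.resolve_right fun hb => ?_
  -- `p * (2^n * 1) = (p * 2^n) * (p * 1)` reads `p + 1 = b * (p + 1)` with `b := p * 2^n`
  have hdistrib := h.2.2.2 p (2 ^ n) hp1 hp.le Nat.one_le_two_pow le_rfl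
  rw [h.2.2.1, h.op_one hp1 hp] at hdistrib
  have hbp := h.lt_op (by omega) hb (by omega) (by omega : p + 1 ≤ 2 ^ n)
  omega

theorem rowPeriod_spec (h : IsLaverOp n op) (hp1 : 1 ≤ p) (hp : p ≤ 2 ^ n) :
    1 ≤ rowPeriod n op p ∧ op p (rowPeriod n op p) = 2 ^ n :=
  Nat.sInf_mem (s := {d | 1 ≤ d ∧ op p d = 2 ^ n})
    ⟨2 ^ n, Nat.one_le_two_pow, h.op_top hp1 hp⟩

theorem rowPeriod_le (h : IsLaverOp n op) (hp1 : 1 ≤ p) (hp : p ≤ 2 ^ n) :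
    rowPeriod n op p ≤ 2 ^ n :=
  Nat.sInf_le (s := {d | 1 ≤ d ∧ op p d = 2 ^ n}) ⟨Nat.one_le_two_pow, h.op_top hp1 hp⟩

theorem op_lt_of_lt_rowPeriod (h : IsLaverOp n op) (hp1 : 1 ≤ p) (hp : p ≤ 2 ^ n) {i : ℕ}
    (hi1 : 1 ≤ i) (hi : i < rowPeriod n op p) : op p i < 2 ^ n :=
  (h.op_le hp1 hp hi1 (by have := h.rowPeriod_le hp1 hp; omega)).lt_of_ne
    fun he => Nat.notMem_of_lt_sInf hi ⟨hi1, he⟩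

theorem op_add_rowPeriod (h : IsLaverOp n op) (hp1 : 1 ≤ p) (hp : p ≤ 2 ^ n) {j : ℕ}
    (hj1 : 1 ≤ j) (hj : j + rowPeriod n op p ≤ 2 ^ n) :
    op p (j + rowPeriod n op p) = op p j := by
  obtain ⟨hd1, hd⟩ := h.rowPeriod_spec hp1 hp
  set d := rowPeriod n op p
  rcases hp.eq_or_lt with rfl | hp
  · rw [h.top_op hd1 (by omega)] at hd; omega
  induction j, hj1 using Nat.le_induction with
  | base =>
    rw [add_comm, h.op_succ hp1 hp hd1 (by omega), hd, h.top_op (by omega) (by omega),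
      h.op_one hp1 hp]
  | succ j hj1 ih =>
    rw [add_right_comm, h.op_succ hp1 hp (by omega) (by omega), ih (by omega),
      ← h.op_succ hp1 hp hj1 (by omega)]

theorem op_eq_op_mod_rowPeriod (h : IsLaverOp n op) (hp1 : 1 ≤ p) (hp : p ≤ 2 ^ n) {q : ℕ}
    (hq1 : 1 ≤ q) (hq : q ≤ 2 ^ n) :
    op p q = op p ((q - 1) % rowPeriod n op p + 1) := by
  have hd1 := (h.rowPeriod_spec hp1 hp).1
  set d := rowPeriod n op p
  induction q using Nat.strong_induction_on with
  | _ q ih =>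
  rcases le_or_gt q d with hqd | hdq
  · rw [Nat.mod_eq_of_lt (by omega), Nat.sub_add_cancel hq1]
  · have hshift := h.op_add_rowPeriod hp1 hp (j := q - d) (by omega) (by omega)
    rw [Nat.sub_add_cancel hdq.le] at hshift
    rw [hshift, ih (q - d) (by omega) (by omega) (by omega),
      show q - 1 = q - d - 1 + d by omega, Nat.add_mod_right]

theorem rowPeriod_dvd (h : IsLaverOp n op) (hp1 : 1 ≤ p) (hp : p ≤ 2 ^ n) :
    rowPeriod n op p ∣ 2 ^ n := by
  have hd1 := (h.rowPeriod_spec hp1 hp).1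
  have hlast := h.op_eq_op_mod_rowPeriod hp1 hp Nat.one_le_two_pow le_rfl
  rw [h.op_top hp1 hp] at hlast
  have hmod : (2 ^ n - 1) % rowPeriod n op p + 1 = rowPeriod n op p := by
    have hlt := Nat.mod_lt (2 ^ n - 1) (by omega : 0 < rowPeriod n op p)
    by_contra hne
    exact (h.op_lt_of_lt_rowPeriod hp1 hp (by omega) (by omega)).ne' hlast
  refine ⟨(2 ^ n - 1) / rowPeriod n op p + 1, ?_⟩
  have hdiv := Nat.div_add_mod (2 ^ n - 1) (rowPeriod n op p)
  have hpos := @Nat.one_le_two_pow n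
  rw [Nat.mul_succ]
  omega

end IsLaverOp

/-- Theorem (Laver), periodicity of rows: for `p` in `{1, …, 2^n}` there is `r` with
`2^r ≤ 2^n` such that `p * 1 < p * 2 < ⋯ < p * 2^r = 2^n`, and the row of `p`
is periodic with period `2^r`. -/
theorem laver_row_periodic (n : ℕ) (op : ℕ → ℕ → ℕ) (h : IsLaverOp n op)
    (p : ℕ) (hp1 : 1 ≤ p) (hp2 : p ≤ 2 ^ n) :
    ∃ r : ℕ, 2 ^ r ≤ 2 ^ n ∧
      (∀ i, 1 ≤ i → i < 2 ^ r → op p i < op p (i + 1)) ∧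
      op p (2 ^ r) = 2 ^ n ∧
      (∀ q, 1 ≤ q → q ≤ 2 ^ n → op p q = op p ((q - 1) % 2 ^ r + 1)) := by
  obtain ⟨r, -, hr⟩ := (Nat.dvd_prime_pow Nat.prime_two).mp (h.rowPeriod_dvd hp1 hp2)
  refine ⟨r, hr ▸ ?_⟩
  refine ⟨h.rowPeriod_le hp1 hp2, fun i hi1 hi => ?_, (h.rowPeriod_spec hp1 hp2).2,
    fun q hq1 hq => h.op_eq_op_mod_rowPeriod hp1 hp2 hq1 hq⟩
  exact h.op_lt_op_succ hp1 hp2 hi1 (hi.trans_le (h.rowPeriod_le hp1 hp2))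
    (h.op_lt_of_lt_rowPeriod hp1 hp2 hi1 hi)
end

section
/- For every n ≥ 1 and every ℤ-valued 2-cocycle φ for A_n, one has φ(x, 2^n) = φ(2^n − 1, 2^n) for every x in {1, …, 2^n}; that is, the last column of every 2-cocycle is constant. -/
/-- `φ` is a `ℤ`-valued rack 2-cocycle for the Laver table `A_n` with operation `op`. -/
def Is2Cocycle (n : ℕ) (op : ℕ → ℕ → ℕ) (φ : ℕ → ℕ → ℤ) : Prop :=
  ∀ x y z, 1 ≤ x → x ≤ 2 ^ n → 1 ≤ y → y ≤ 2 ^ n → 1 ≤ z → z ≤ 2 ^ n →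
    φ (op x y) (op x z) + φ x z = φ x (op y z) + φ y z

/-!
Each row `x < 2^n` of `A_n` increases strictly until it reaches `2^n`, so some `p` has
`x * p = 2^n`. The cocycle identity at `(x, x, p)` then reads `φ(x * x, 2^n) = φ(x, 2^n)`,
and since `x < x * x`, downward induction on `x` makes every entry of the last column equal to
`φ(2^n, 2^n)`.
-/

namespace IsLaverOp

variable {n : ℕ} {op : ℕ → ℕ → ℕ}

theorem op_add_one (h : IsLaverOp n op) {x y : ℕ} (hx₁ : 1 ≤ x) (hx₂ : x < 2 ^ n)
    (hy₁ : 1 ≤ y) (hy₂ : y < 2 ^ n) : op x (y + 1) = op (op x y) (x + 1) := by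
  have := h.2.2.2 x y hx₁ hx₂.le hy₁ hy₂.le
  rwa [h.2.1 y hy₁ hy₂, h.2.1 x hx₁ hx₂] at this

theorem op_two_pow_left (h : IsLaverOp n op) :
    ∀ y, 1 ≤ y → y ≤ 2 ^ n → op (2 ^ n) y = y := by
  refine Nat.le_induction (fun _ => h.2.2.1) fun y hy₁ ih hy₂ => ?_
  have hy : y < 2 ^ n := by omega
  have := h.2.2.2 (2 ^ n) y Nat.one_le_two_pow le_rfl hy₁ hy.le
  rw [h.2.1 y hy₁ hy, h.2.2.1, ih hy.le] at this
  rw [this, h.2.1 y hy₁ hy]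

theorem lt_op_s6 (h : IsLaverOp n op) {x : ℕ} (hx₁ : 1 ≤ x) (hx₂ : x < 2 ^ n) :
    ∀ y, 1 ≤ y → y ≤ 2 ^ n → x < op x y := by
  induction hk : 2 ^ n - x using Nat.strong_induction_on generalizing x with
  | _ k ih =>
    refine Nat.le_induction (fun _ => by rw [h.2.1 x hx₁ hx₂]; omega) fun y hy₁ ihy hy₂ => ?_
    have hy : y < 2 ^ n := by omega
    have hxy : x < op x y := ihy hy.le
    rw [h.op_add_one hx₁ hx₂ hy₁ hy]
    rcases (h.1 x y hx₁ hx₂.le hy₁ hy.le).2.lt_or_eq with hlt | htop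
    · exact hxy.trans (ih _ (by omega) (by omega) hlt rfl (x + 1) (by omega) (by omega))
    · rw [htop, h.op_two_pow_left (x + 1) (by omega) (by omega)]
      omega

theorem exists_op_eq_two_pow (h : IsLaverOp n op) {x : ℕ} (hx₁ : 1 ≤ x) (hx₂ : x < 2 ^ n) :
    ∃ p, 1 ≤ p ∧ p ≤ 2 ^ n ∧ op x p = 2 ^ n := by
  by_contra! hne
  have hlt : ∀ y, 1 ≤ y → y ≤ 2 ^ n → op x y < 2 ^ n := fun y hy₁ hy₂ =>
    (h.1 x y hx₁ hx₂.le hy₁ hy₂).2.lt_of_ne (hne y hy₁ hy₂)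
  -- Below the top, `x * (y + 1) = (x * y) * (x + 1) > x * y`, so row `x` grows by at least one
  -- per column.
  have hgrow : ∀ y, 1 ≤ y → y ≤ 2 ^ n → x + y ≤ op x y := by
    refine Nat.le_induction (fun _ => by rw [h.2.1 x hx₁ hx₂]) fun y hy₁ ih hy₂ => ?_
    have hy : y < 2 ^ n := by omega
    have hxy := h.1 x y hx₁ hx₂.le hy₁ hy.le
    have := h.lt_op_s6 hxy.1 (hlt y hy₁ hy.le) (x + 1) (by omega) (by omega)
    rw [h.op_add_one hx₁ hx₂ hy₁ hy]
    omega
  have := hgrow (2 ^ n) Nat.one_le_two_pow le_rfl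
  have := hlt (2 ^ n) Nat.one_le_two_pow le_rfl
  omega

end IsLaverOp

namespace Is2Cocycle

variable {n : ℕ} {op : ℕ → ℕ → ℕ} {φ : ℕ → ℕ → ℤ}

theorem apply_op_self_left (hφ : Is2Cocycle n op φ) {x z : ℕ} (hx₁ : 1 ≤ x) (hx₂ : x ≤ 2 ^ n)
    (hz₁ : 1 ≤ z) (hz₂ : z ≤ 2 ^ n) : φ (op x x) (op x z) = φ x (op x z) := by
  have := hφ x x z hx₁ hx₂ hx₁ hx₂ hz₁ hz₂
  omega

theorem apply_two_pow_eq (hφ : Is2Cocycle n op φ) (h : IsLaverOp n op) {x : ℕ} (hx₁ : 1 ≤ x)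
    (hx₂ : x ≤ 2 ^ n) : φ x (2 ^ n) = φ (2 ^ n) (2 ^ n) := by
  induction hk : 2 ^ n - x using Nat.strong_induction_on generalizing x with
  | _ k ih =>
    rcases hx₂.lt_or_eq with hlt | rfl
    · obtain ⟨p, hp₁, hp₂, hp⟩ := h.exists_op_eq_two_pow hx₁ hlt
      have hxx := h.1 x x hx₁ hx₂ hx₁ hx₂
      have hgt := h.lt_op_s6 hx₁ hlt x hx₁ hx₂
      rw [← hp, ← hφ.apply_op_self_left hx₁ hx₂ hp₁ hp₂, hp]
      exact ih _ (by omega) hxx.1 hxx.2 rfl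
    · rfl

end Is2Cocycle

/-- The last column of every 2-cocycle for `A_n` is constant. -/
theorem laver_two_cocycle_last_column (n : ℕ) (hn : 1 ≤ n)
    (op : ℕ → ℕ → ℕ) (h : IsLaverOp n op)
    (φ : ℕ → ℕ → ℤ) (hφ : Is2Cocycle n op φ) :
    ∀ x, 1 ≤ x → x ≤ 2 ^ n → φ x (2 ^ n) = φ (2 ^ n - 1) (2 ^ n) := by
  intro x hx₁ hx₂
  have htop : 1 < 2 ^ n := Nat.one_lt_two_pow (by omega)
  rw [hφ.apply_two_pow_eq h hx₁ hx₂, hφ.apply_two_pow_eq h (x := 2 ^ n - 1) (by omega) (by omega)]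
end

section
/- For every n ≥ 1, if φ is a ℤ-valued 2-cocycle for A_n satisfying φ(2^n − 1, y) = 0 for every y in {1, …, 2^n}, then φ(x, y) = 0 for all x, y in {1, …, 2^n}. -/
/-!
Left distributivity forces the last row of `A_n` to be the identity and the penultimate row to be
constantly `2^n`. The cocycle identity at `x = 2^n - 1` then reads
`φ(2^n, 2^n) + φ(2^n - 1, z) = φ(2^n - 1, y * z) + φ(y, z)`, so a vanishing penultimate row makes
`φ` constant, and that constant is one of the vanishing entries.
-/

namespace IsLaverOp

variable {n : ℕ} {op : ℕ → ℕ → ℕ}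

theorem op_succ_right (h : IsLaverOp n op) {x y : ℕ} (hx₁ : 1 ≤ x) (hx : x ≤ 2 ^ n)
    (hy₁ : 1 ≤ y) (hy : y < 2 ^ n) : op x (y + 1) = op (op x y) (op x 1) := by
  rw [← h.2.1 y hy₁ hy]
  exact h.2.2.2 x y hx₁ hx hy₁ hy.le

theorem op_top_left (h : IsLaverOp n op) {y : ℕ} (hy₁ : 1 ≤ y) (hy : y ≤ 2 ^ n) :
    op (2 ^ n) y = y := by
  induction y, hy₁ using Nat.le_induction with
  | base => exact h.2.2.1
  | succ m hm ih =>
    rw [h.op_succ_right Nat.one_le_two_pow le_rfl hm (by omega), ih (by omega), h.2.2.1,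
      h.2.1 m hm (by omega)]

theorem op_pred_top_left (h : IsLaverOp n op) (hn : 1 ≤ n) {y : ℕ} (hy₁ : 1 ≤ y)
    (hy : y ≤ 2 ^ n) : op (2 ^ n - 1) y = 2 ^ n := by
  have hN : 2 ≤ 2 ^ n := Nat.le_self_pow (by omega) 2
  have hbase : op (2 ^ n - 1) 1 = 2 ^ n := by
    rw [h.2.1 _ (by omega) (by omega)]
    omega
  induction y, hy₁ using Nat.le_induction with
  | base => exact hbase
  | succ m hm ih =>
    rw [h.op_succ_right (by omega) (by omega) hm (by omega), ih (by omega), hbase,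
      h.op_top_left Nat.one_le_two_pow le_rfl]

end IsLaverOp

theorem Is2Cocycle.eq_zero_of_constant_row {n : ℕ} {op : ℕ → ℕ → ℕ} {φ : ℕ → ℕ → ℤ}
    (hφ : Is2Cocycle n op φ)
    (hclosed : ∀ x y, 1 ≤ x → x ≤ 2 ^ n → 1 ≤ y → y ≤ 2 ^ n → 1 ≤ op x y ∧ op x y ≤ 2 ^ n)
    {a c : ℕ} (ha₁ : 1 ≤ a) (ha : a ≤ 2 ^ n)
    (hconst : ∀ y, 1 ≤ y → y ≤ 2 ^ n → op a y = c)
    (hrow : ∀ y, 1 ≤ y → y ≤ 2 ^ n → φ a y = 0) :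
    ∀ x y, 1 ≤ x → x ≤ 2 ^ n → 1 ≤ y → y ≤ 2 ^ n → φ x y = 0 := by
  have hdiag : ∀ y z, 1 ≤ y → y ≤ 2 ^ n → 1 ≤ z → z ≤ 2 ^ n → φ y z = φ c c := by
    intro y z hy₁ hy hz₁ hz
    have hcocycle := hφ a y z ha₁ ha hy₁ hy hz₁ hz
    obtain ⟨hyz₁, hyz⟩ := hclosed y z hy₁ hy hz₁ hz
    rw [hconst y hy₁ hy, hconst z hz₁ hz, hrow z hz₁ hz, hrow _ hyz₁ hyz] at hcocycle
    omega
  have hc : φ c c = 0 := by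
    rw [← hdiag a 1 ha₁ ha le_rfl Nat.one_le_two_pow, hrow 1 le_rfl Nat.one_le_two_pow]
  intro x y hx₁ hx hy₁ hy
  rw [hdiag x y hx₁ hx hy₁ hy, hc]

/-- A 2-cocycle for `A_n` whose penultimate row vanishes is the zero cocycle. -/
theorem laver_two_cocycle_penultimate_row (n : ℕ) (hn : 1 ≤ n)
    (op : ℕ → ℕ → ℕ) (h : IsLaverOp n op)
    (φ : ℕ → ℕ → ℤ) (hφ : Is2Cocycle n op φ)
    (hrow : ∀ y, 1 ≤ y → y ≤ 2 ^ n → φ (2 ^ n - 1) y = 0) :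
    ∀ x y, 1 ≤ x → x ≤ 2 ^ n → 1 ≤ y → y ≤ 2 ^ n → φ x y = 0 := by
  have hN : 2 ≤ 2 ^ n := Nat.le_self_pow (by omega) 2
  exact hφ.eq_zero_of_constant_row h.1 (by omega) (by omega)
    (fun y hy₁ hy => h.op_pred_top_left hn hy₁ hy) hrow
end

section
/- For every n ≥ 1, every ℤ-valued 2-cocycle φ for A_n admits the decomposition φ(x, y) = Σ_{q=1}^{2^n − 1} (φ(2^n − 1, q) − φ(2^n − 1, 2^n)) · φ_{q,n}(x, y) + φ(2^n − 1, 2^n) for all x, y in {1, …, 2^n}; moreover, if integers λ_1, …, λ_{2^n − 1}, λ satisfy Σ_{q=1}^{2^n − 1} λ_q · φ_{q,n}(x, y) + λ = 0 for all x, y, then λ_1 = ⋯ = λ_{2^n − 1} = λ = 0. -/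
/-- The coboundary `φ_{q,n}(x, y) = δ_{y,q} − δ_{x *_n y, q}`. -/
def laverPhi (op : ℕ → ℕ → ℕ) (q x y : ℕ) : ℤ :=
  (if y = q then 1 else 0) - (if op x y = q then 1 else 0)

/-!
Write `N = 2^n` and `e = 2^n - 1`. In `A_n` the row of `N` is the identity and the row of `e`
is constantly `N`. The cocycle identity at `(e, x, y)` then reads
`φ(N, N) + φ(e, y) = φ(e, x * y) + φ(x, y)`, and at `(e, e, N)` it gives `φ(N, N) = φ(e, N)`:
so `φ - φ(e, N)` is the coboundary of the 1-cochain `q ↦ φ(e, q) - φ(e, N)`, which is the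
decomposition. Independence follows by evaluating at `(N, 1)`, where every `φ_{q,n}` vanishes,
and at `(e, q)`, where `φ_{p,n}` is `δ_{q,p}`.
-/

namespace IsLaverOp

variable {n : ℕ} {op : ℕ → ℕ → ℕ}

theorem op_two_pow (h : IsLaverOp n op) (y : ℕ) (hy1 : 1 ≤ y) (hyN : y ≤ 2 ^ n) :
    op (2 ^ n) y = y := by
  induction y, hy1 using Nat.le_induction with
  | base => exact h.2.2.1
  | succ m hm ih =>
    have hmN : m < 2 ^ n := by omega
    calc op (2 ^ n) (m + 1) = op (2 ^ n) (op m 1) := by rw [h.2.1 m hm hmN]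
      _ = op (op (2 ^ n) m) (op (2 ^ n) 1) := h.2.2.2 _ _ Nat.one_le_two_pow le_rfl hm hmN.le
      _ = m + 1 := by rw [ih hmN.le, h.2.2.1, h.2.1 m hm hmN]

theorem op_two_pow_sub_one (h : IsLaverOp n op) (hn : 1 ≤ n) (y : ℕ) (hy1 : 1 ≤ y)
    (hyN : y ≤ 2 ^ n) : op (2 ^ n - 1) y = 2 ^ n := by
  have hN : 2 ≤ 2 ^ n := Nat.le_self_pow (by omega) 2
  have he1 : op (2 ^ n - 1) 1 = 2 ^ n := by rw [h.2.1 _ (by omega) (by omega)]; omega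
  induction y, hy1 using Nat.le_induction with
  | base => exact he1
  | succ m hm ih =>
    have hmN : m < 2 ^ n := by omega
    calc op (2 ^ n - 1) (m + 1) = op (2 ^ n - 1) (op m 1) := by rw [h.2.1 m hm hmN]
      _ = op (op (2 ^ n - 1) m) (op (2 ^ n - 1) 1) :=
        h.2.2.2 _ _ (by omega) (by omega) hm hmN.le
      _ = 2 ^ n := by rw [ih hmN.le, he1, h.op_two_pow _ Nat.one_le_two_pow le_rfl]

end IsLaverOp

theorem Is2Cocycle.apply_eq_of_row_const {n : ℕ} {op : ℕ → ℕ → ℕ} {φ : ℕ → ℕ → ℤ}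
    (hφ : Is2Cocycle n op φ) {e N : ℕ} (he1 : 1 ≤ e) (heN : e ≤ 2 ^ n) (hN1 : 1 ≤ N)
    (hNN : N ≤ 2 ^ n) (hrow : ∀ z, 1 ≤ z → z ≤ 2 ^ n → op e z = N)
    {x y : ℕ} (hx1 : 1 ≤ x) (hxN : x ≤ 2 ^ n) (hy1 : 1 ≤ y) (hyN : y ≤ 2 ^ n) :
    φ x y = φ e y - φ e (op x y) + φ e N := by
  have hdiag : φ N N = φ e N := by
    have := hφ e e N he1 heN he1 heN hN1 hNN
    rw [hrow e he1 heN, hrow N hN1 hNN] at this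
    omega
  have := hφ e x y he1 heN hx1 hxN hy1 hyN
  rw [hrow x hx1 hxN, hrow y hy1 hyN, hdiag] at this
  omega

theorem sum_Icc_sub_mul_ite_eq (g : ℕ → ℤ) {N z : ℕ} (hz1 : 1 ≤ z) (hzN : z ≤ N) :
    ∑ q ∈ Finset.Icc 1 (N - 1), (g q - g N) * (if z = q then 1 else 0) = g z - g N := by
  simp only [mul_ite, mul_one, mul_zero, Finset.sum_ite_eq, Finset.mem_Icc]
  split_ifs with hz
  · rfl
  · rw [show z = N by omega, sub_self]

theorem sum_Icc_mul_ite_eq (lam : ℕ → ℤ) {N q : ℕ} (hq1 : 1 ≤ q) (hqN : q ≤ N - 1) :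
    ∑ p ∈ Finset.Icc 1 (N - 1), lam p * (if q = p then 1 else 0) = lam q := by
  simp only [mul_ite, mul_one, mul_zero, Finset.sum_ite_eq, Finset.mem_Icc]
  exact if_pos ⟨hq1, hqN⟩

section laverPhi

variable {op : ℕ → ℕ → ℕ} {q x y : ℕ}

theorem laverPhi_eq_zero_of_op_eq (hxy : op x y = y) : laverPhi op q x y = 0 := by
  rw [laverPhi, hxy, sub_self]

theorem laverPhi_eq_ite_of_op_ne (hq : op x y ≠ q) :
    laverPhi op q x y = if y = q then 1 else 0 := by
  rw [laverPhi, if_neg hq, sub_zero]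

theorem sum_Icc_sub_mul_laverPhi (g : ℕ → ℤ) {N : ℕ} (hy1 : 1 ≤ y) (hyN : y ≤ N)
    (hxy1 : 1 ≤ op x y) (hxyN : op x y ≤ N) :
    ∑ q ∈ Finset.Icc 1 (N - 1), (g q - g N) * laverPhi op q x y = g y - g (op x y) := by
  simp only [laverPhi, mul_sub, Finset.sum_sub_distrib, sum_Icc_sub_mul_ite_eq g hy1 hyN,
    sum_Icc_sub_mul_ite_eq g hxy1 hxyN]
  ring

end laverPhi

/-- Every 2-cocycle for `A_n` decomposes over the coboundaries `φ_{q,n}`, `1 ≤ q < 2^n`,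
together with the constant cocycle, and this family is linearly independent. -/
theorem laver_two_cocycle_basis (n : ℕ) (hn : 1 ≤ n)
    (op : ℕ → ℕ → ℕ) (h : IsLaverOp n op) :
    (∀ φ : ℕ → ℕ → ℤ, Is2Cocycle n op φ →
      ∀ x y, 1 ≤ x → x ≤ 2 ^ n → 1 ≤ y → y ≤ 2 ^ n →
        φ x y = (∑ q ∈ Finset.Icc 1 (2 ^ n - 1),
            (φ (2 ^ n - 1) q - φ (2 ^ n - 1) (2 ^ n)) * laverPhi op q x y)
          + φ (2 ^ n - 1) (2 ^ n)) ∧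
    (∀ (lam : ℕ → ℤ) (c : ℤ),
      (∀ x y, 1 ≤ x → x ≤ 2 ^ n → 1 ≤ y → y ≤ 2 ^ n →
        (∑ q ∈ Finset.Icc 1 (2 ^ n - 1), lam q * laverPhi op q x y) + c = 0) →
      (∀ q, 1 ≤ q → q ≤ 2 ^ n - 1 → lam q = 0) ∧ c = 0) := by
  have hN : 2 ≤ 2 ^ n := Nat.le_self_pow (by omega) 2
  have hrow := h.op_two_pow_sub_one hn
  refine ⟨fun φ hφ x y hx1 hxN hy1 hyN => ?_, fun lam c hzero => ?_⟩
  · have hxy := h.1 x y hx1 hxN hy1 hyN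
    rw [sum_Icc_sub_mul_laverPhi _ hy1 hyN hxy.1 hxy.2]
    exact hφ.apply_eq_of_row_const (by omega) (by omega) Nat.one_le_two_pow le_rfl hrow
      hx1 hxN hy1 hyN
  · have hc : c = 0 := by
      simpa [laverPhi_eq_zero_of_op_eq h.2.2.1] using
        hzero (2 ^ n) 1 Nat.one_le_two_pow le_rfl le_rfl Nat.one_le_two_pow
    refine ⟨fun q hq1 hqe => ?_, hc⟩
    have hval := hzero (2 ^ n - 1) q (by omega) (by omega) hq1 (by omega)
    have hphi : ∀ p ∈ Finset.Icc 1 (2 ^ n - 1), laverPhi op p (2 ^ n - 1) q =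
        if q = p then 1 else 0 := fun p hp =>
      laverPhi_eq_ite_of_op_ne (by rw [hrow q hq1 (by omega)]; simp at hp; omega)
    rwa [Finset.sum_congr rfl fun p hp => by rw [hphi p hp], sum_Icc_mul_ite_eq lam hq1 hqe,
      hc, add_zero] at hval
end

section
/- For every n ≥ 0, every p in {1, …, 2^n}, and every natural number d such that 2^d divides p and 2^{d+1} does not divide p, the equality p *_n q = q holds for every q with 2^n − 2^d < q ≤ 2^n, and fails for every q with 1 ≤ q ≤ 2^n − 2^d. In particular, for q ≤ 2^{n-1} (with n ≥ 1), the equality p *_n q = q holds only for p = 2^n. -/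
/-!
Induct on `n`. The map `x ↦ residue (2^n) x` from `A_{n+1}` onto `A_n` is a homomorphism:
rows of `A_{n+1}` are `2^n`-periodic, and rows `x` and `x + 2^n` agree modulo `2^n` (descending
induction on `x`). If `2^d` exactly divides `p < 2^{n+1}`, the induction hypothesis thus says
that `p * w ≡ w (mod 2^n)` exactly for `2^n - 2^d < w ≤ 2^n`, and by periodicity it remains to
show `p * w = w + 2^n` rather than `w` for those `w`. Descending from `p * 2^n = 2^{n+1}`: if
`p * w = w`, then `p * (w + 1) = (p * w) * (p + 1) = w * (p + 1) = w + 1`, because the period of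
row `w` is at most `2 (2^n - w) < 2^{d+1}`, hence divides `2^d` and so `p`.
-/

namespace Laver

def residue (M t : ℕ) : ℕ := (t - 1) % M + 1

section Residue

variable {M a b t : ℕ}

lemma one_le_residue : 1 ≤ residue M t := Nat.le_add_left 1 _

lemma residue_le (hM : 0 < M) : residue M t ≤ M := Nat.mod_lt _ hM

lemma residue_of_le (ht1 : 1 ≤ t) (ht : t ≤ M) : residue M t = t := by
  rw [residue, Nat.mod_eq_of_lt (by omega)]
  omega

lemma residue_modEq (ht : 1 ≤ t) : residue M t ≡ t [MOD M] := by
  have := (Nat.mod_modEq (t - 1) M).add_right 1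
  rwa [Nat.sub_add_cancel ht] at this

lemma residue_eq_residue_iff (ha : 1 ≤ a) (hb : 1 ≤ b) :
    residue M a = residue M b ↔ a ≡ b [MOD M] := by
  rw [residue, residue, Nat.add_right_cancel_iff]
  constructor
  · intro h
    simpa only [Nat.sub_add_cancel ha, Nat.sub_add_cancel hb] using Nat.ModEq.add_right 1 h
  · intro h
    exact Nat.ModEq.add_right_cancel' 1 (by rwa [Nat.sub_add_cancel ha, Nat.sub_add_cancel hb])

lemma residue_eq_iff_modEq (ht : 1 ≤ t) (hb1 : 1 ≤ b) (hb : b ≤ M) :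
    residue M t = b ↔ t ≡ b [MOD M] := by
  rw [← residue_eq_residue_iff ht hb1, residue_of_le hb1 hb]

lemma dvd_residue_iff {e : ℕ} (he : e ∣ M) (ht : 1 ≤ t) : e ∣ residue M t ↔ e ∣ t :=
  (residue_modEq ht).dvd_iff he

lemma residue_eq_sub (h1 : M < t) (h2 : t ≤ 2 * M) : residue M t = t - M := by
  have hsub : t - M ≡ t [MOD M] :=
    (Nat.modEq_iff_dvd' (by omega)).2 (by rw [Nat.sub_sub_self h1.le])
  rw [← residue_of_le (M := M) (t := t - M) (by omega) (by omega)]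
  exact (residue_eq_residue_iff (by omega) (by omega)).2 hsub.symm

lemma eq_or_eq_add_of_modEq (h : a ≡ b [MOD M]) (ha1 : 1 ≤ a) (ha : a ≤ 2 * M) (hb1 : 1 ≤ b)
    (hb : b ≤ M) : a = b ∨ a = b + M := by
  have hab := (residue_eq_residue_iff ha1 hb1).2 h
  rw [residue_of_le hb1 hb] at hab
  rcases le_or_gt a M with haM | hMa
  · rw [residue_of_le ha1 haM] at hab
    exact Or.inl hab
  · rw [residue_eq_sub hMa ha] at hab
    omega

end Residue

lemma dvd_two_pow_of_dvd_of_lt {e a b : ℕ} (he : e ∣ 2 ^ a) (hlt : e < 2 ^ (b + 1)) :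
    e ∣ 2 ^ b := by
  obtain ⟨j, -, rfl⟩ := (Nat.dvd_prime_pow Nat.prime_two).1 he
  exact pow_dvd_pow 2 (Nat.lt_succ_iff.1 ((Nat.pow_lt_pow_iff_right (by norm_num)).1 hlt))

lemma two_pow_sub_two_pow_lt {m d q : ℕ} (hd : ¬ 2 ^ (d + 1) ∣ 2 ^ m) (hq : 1 ≤ q) :
    2 ^ m - 2 ^ d < q := by
  have hmd : m ≤ d := by
    by_contra! hdm
    exact hd (pow_dvd_pow 2 hdm)
  have := Nat.pow_le_pow_right two_pos hmd
  omega

lemma two_pow_dvd_residue_and_not_dvd {n d p : ℕ} (hp1 : 1 ≤ p) (hp : p < 2 ^ (n + 1))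
    (hd : 2 ^ d ∣ p) (hd' : ¬ 2 ^ (d + 1) ∣ p) :
    2 ^ d ∣ residue (2 ^ n) p ∧ ¬ 2 ^ (d + 1) ∣ residue (2 ^ n) p := by
  rcases lt_or_ge d n with hdn | hnd
  · rw [dvd_residue_iff (pow_dvd_pow 2 hdn.le) hp1, dvd_residue_iff (pow_dvd_pow 2 hdn) hp1]
    exact ⟨hd, hd'⟩
  · have hpn : p = 2 ^ n := Nat.eq_of_dvd_of_lt_two_mul (by omega)
      ((pow_dvd_pow 2 hnd).trans hd) (by rwa [pow_succ'] at hp)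
    rw [residue_of_le hp1 hpn.le]
    exact ⟨hd, hd'⟩

noncomputable def period (op : ℕ → ℕ → ℕ) (m x : ℕ) : ℕ :=
  sInf {j | 1 ≤ j ∧ op x j = 2 ^ m}

lemma period_le {op : ℕ → ℕ → ℕ} {m x j : ℕ} (hj1 : 1 ≤ j) (hj : op x j = 2 ^ m) :
    period op m x ≤ j :=
  Nat.sInf_le ⟨hj1, hj⟩

lemma apply_ne_two_pow_of_lt_period {op : ℕ → ℕ → ℕ} {m x j : ℕ} (hj1 : 1 ≤ j)
    (hj : j < period op m x) : op x j ≠ 2 ^ m :=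
  fun he => (period_le hj1 he).not_gt hj

variable {k : ℕ} {op : ℕ → ℕ → ℕ} {y w : ℕ} in
lemma apply_modEq_apply_residue {a : ℕ}
    (hrows : ∀ x, a < x → x ≤ 2 ^ k → ∀ w, 1 ≤ w → w ≤ 2 ^ (k + 1) →
      op (x + 2 ^ k) w ≡ op x w [MOD 2 ^ k])
    (hy1 : 1 ≤ y) (hy : y ≤ 2 ^ (k + 1)) (hay : a < residue (2 ^ k) y) (hw1 : 1 ≤ w)
    (hw : w ≤ 2 ^ (k + 1)) : op y w ≡ op (residue (2 ^ k) y) w [MOD 2 ^ k] := by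
  have hk : 2 ^ (k + 1) = 2 * 2 ^ k := pow_succ' 2 k
  have hres := residue_le (t := y) (Nat.two_pow_pos k)
  rcases eq_or_eq_add_of_modEq (residue_modEq hy1).symm hy1 (by omega) one_le_residue hres
    with hy' | hy'
  · rw [← hy']
  · conv_lhs => rw [hy']
    exact hrows _ hay hres w hw1 hw

def quotOp (k : ℕ) (op : ℕ → ℕ → ℕ) (x y : ℕ) : ℕ := residue (2 ^ k) (op x y)

end Laver

open Laver

namespace IsLaverOp

section Basic

variable {m : ℕ} {op : ℕ → ℕ → ℕ} {x y j q : ℕ}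

lemma one_le_apply (h : IsLaverOp m op) (hx1 : 1 ≤ x) (hx : x ≤ 2 ^ m) (hy1 : 1 ≤ y)
    (hy : y ≤ 2 ^ m) : 1 ≤ op x y :=
  (h.1 x y hx1 hx hy1 hy).1

lemma apply_le (h : IsLaverOp m op) (hx1 : 1 ≤ x) (hx : x ≤ 2 ^ m) (hy1 : 1 ≤ y)
    (hy : y ≤ 2 ^ m) : op x y ≤ 2 ^ m :=
  (h.1 x y hx1 hx hy1 hy).2

lemma apply_one (h : IsLaverOp m op) (hx1 : 1 ≤ x) (hx : x < 2 ^ m) : op x 1 = x + 1 :=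
  h.2.1 x hx1 hx

lemma two_pow_apply_one (h : IsLaverOp m op) : op (2 ^ m) 1 = 1 :=
  h.2.2.1

lemma apply_apply_one (h : IsLaverOp m op) (hx1 : 1 ≤ x) (hx : x ≤ 2 ^ m) (hy1 : 1 ≤ y)
    (hy : y ≤ 2 ^ m) : op x (op y 1) = op (op x y) (op x 1) :=
  h.2.2.2 x y hx1 hx hy1 hy

lemma apply_add_one (h : IsLaverOp m op) (hx1 : 1 ≤ x) (hx : x < 2 ^ m) (hq1 : 1 ≤ q)
    (hq : q < 2 ^ m) : op x (q + 1) = op (op x q) (x + 1) := by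
  rw [← h.apply_one hq1 hq, h.apply_apply_one hx1 hx.le hq1 hq.le, h.apply_one hx1 hx]

lemma two_pow_apply (h : IsLaverOp m op) (hy1 : 1 ≤ y) (hy : y ≤ 2 ^ m) : op (2 ^ m) y = y := by
  induction y, hy1 using Nat.le_induction with
  | base => exact h.two_pow_apply_one
  | succ y hy1 ih =>
    rw [← h.apply_one hy1 (by omega), h.apply_apply_one Nat.one_le_two_pow le_rfl hy1 (by omega),
      ih (by omega), h.two_pow_apply_one]

lemma lt_apply (h : IsLaverOp m op) (hx1 : 1 ≤ x) (hx : x < 2 ^ m) (hy1 : 1 ≤ y)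
    (hy : y ≤ 2 ^ m) : x < op x y := by
  induction hk : 2 ^ m - x using Nat.strong_induction_on generalizing x y with
  | _ k ih =>
    induction y, hy1 using Nat.le_induction with
    | base => rw [h.apply_one hx1 hx]; omega
    | succ y hy1 ihy =>
      have hxz : x < op x y := ihy (by omega)
      have hz : op x y ≤ 2 ^ m := h.apply_le hx1 hx.le hy1 (by omega)
      rw [h.apply_add_one hx1 hx hy1 (by omega)]
      rcases hz.lt_or_eq with hz | hz
      · exact hxz.trans (ih _ (by omega) (by omega) hz (by omega) (by omega) rfl)
      · rw [hz, h.two_pow_apply (by omega) (by omega)]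
        omega

lemma apply_two_pow (h : IsLaverOp m op) (hx1 : 1 ≤ x) (hx : x ≤ 2 ^ m) :
    op x (2 ^ m) = 2 ^ m := by
  rcases hx.lt_or_eq with hx | rfl
  · have hg := h.apply_le hx1 hx.le Nat.one_le_two_pow le_rfl
    have hxg : x < op x (2 ^ m) := h.lt_apply hx1 hx Nat.one_le_two_pow le_rfl
    refine hg.eq_or_lt.resolve_right fun hg => ?_
    -- `x + 1 = x * (2^m * 1) = (x * 2^m) * (x + 1)`, which exceeds `x * 2^m > x`
    have hld := h.apply_apply_one hx1 hx.le Nat.one_le_two_pow le_rfl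
    rw [h.two_pow_apply_one, h.apply_one hx1 hx] at hld
    have := h.lt_apply (by omega) hg (y := x + 1) (by omega) (by omega)
    omega
  · exact h.two_pow_apply Nat.one_le_two_pow le_rfl

lemma one_le_period_and_apply_period (h : IsLaverOp m op) (hx1 : 1 ≤ x) (hx : x ≤ 2 ^ m) :
    1 ≤ period op m x ∧ op x (period op m x) = 2 ^ m :=
  Nat.sInf_mem (s := {j | 1 ≤ j ∧ op x j = 2 ^ m})
    ⟨2 ^ m, Nat.one_le_two_pow, h.apply_two_pow hx1 hx⟩

lemma one_le_period (h : IsLaverOp m op) (hx1 : 1 ≤ x) (hx : x ≤ 2 ^ m) : 1 ≤ period op m x :=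
  (h.one_le_period_and_apply_period hx1 hx).1

lemma apply_period (h : IsLaverOp m op) (hx1 : 1 ≤ x) (hx : x ≤ 2 ^ m) :
    op x (period op m x) = 2 ^ m :=
  (h.one_le_period_and_apply_period hx1 hx).2

lemma period_le_two_pow (h : IsLaverOp m op) (hx1 : 1 ≤ x) (hx : x ≤ 2 ^ m) :
    period op m x ≤ 2 ^ m :=
  period_le Nat.one_le_two_pow (h.apply_two_pow hx1 hx)

lemma apply_add_period (h : IsLaverOp m op) (hx1 : 1 ≤ x) (hx : x < 2 ^ m) (hj1 : 1 ≤ j)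
    (hj : j + period op m x ≤ 2 ^ m) : op x (j + period op m x) = op x j := by
  have hπ := h.one_le_period hx1 hx.le
  induction j, hj1 using Nat.le_induction with
  | base =>
    rw [add_comm, h.apply_add_one hx1 hx hπ (by omega), h.apply_period hx1 hx.le,
      h.two_pow_apply (by omega) (by omega), h.apply_one hx1 hx]
  | succ j hj1 ih =>
    rw [add_right_comm, h.apply_add_one hx1 hx (by omega) (by omega), ih (by omega),
      h.apply_add_one hx1 hx hj1 (by omega)]

lemma apply_add_of_period_dvd (h : IsLaverOp m op) (hx1 : 1 ≤ x) (hx : x < 2 ^ m) (hj1 : 1 ≤ j)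
    {c : ℕ} (hc : period op m x ∣ c) (hjc : j + c ≤ 2 ^ m) : op x (j + c) = op x j := by
  obtain ⟨k, rfl⟩ := hc
  induction k with
  | zero => simp
  | succ k ih =>
    rw [mul_add_one, ← add_assoc, h.apply_add_period hx1 hx (by omega) (by linarith),
      ih (by linarith)]

lemma apply_eq_two_pow_iff (h : IsLaverOp m op) (hx1 : 1 ≤ x) (hx : x < 2 ^ m) (hj1 : 1 ≤ j)
    (hj : j ≤ 2 ^ m) : op x j = 2 ^ m ↔ period op m x ∣ j := by
  have hπ := h.one_le_period hx1 hx.le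
  constructor
  · intro hxj
    by_contra hndvd
    have hr : 0 < j % period op m x :=
      Nat.pos_of_ne_zero fun h0 => hndvd (Nat.dvd_of_mod_eq_zero h0)
    have hsplit := Nat.mod_add_div j (period op m x)
    rw [← hsplit, h.apply_add_of_period_dvd hx1 hx hr (dvd_mul_right _ _) (by omega)] at hxj
    exact apply_ne_two_pow_of_lt_period hr (Nat.mod_lt _ (by omega)) hxj
  · intro hdvd
    have hle := Nat.le_of_dvd (by omega) hdvd
    rw [← Nat.add_sub_cancel' hle, h.apply_add_of_period_dvd hx1 hx hπ
      (Nat.dvd_sub hdvd dvd_rfl) (by omega), h.apply_period hx1 hx.le]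

lemma period_dvd_two_pow (h : IsLaverOp m op) (hx1 : 1 ≤ x) (hx : x < 2 ^ m) :
    period op m x ∣ 2 ^ m :=
  (h.apply_eq_two_pow_iff hx1 hx Nat.one_le_two_pow le_rfl).1 (h.apply_two_pow hx1 hx.le)

lemma strictMonoOn_apply (h : IsLaverOp m op) (hx1 : 1 ≤ x) (hx : x < 2 ^ m) :
    StrictMonoOn (op x) (Set.Icc 1 (period op m x)) := by
  have hπ := h.period_le_two_pow hx1 hx.le
  refine strictMonoOn_of_lt_add_one Set.ordConnected_Icc fun j _ hj hj' => ?_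
  have hj2 : j ≤ 2 ^ m := hj.2.trans hπ
  have hne := apply_ne_two_pow_of_lt_period (op := op) hj.1 hj'.2
  rw [h.apply_add_one hx1 hx hj.1 (lt_of_lt_of_le hj'.2 hπ)]
  exact h.lt_apply (h.one_le_apply hx1 hx.le hj.1 hj2)
    ((h.apply_le hx1 hx.le hj.1 hj2).lt_of_ne hne) (by omega) (by omega)

lemma add_le_apply (h : IsLaverOp m op) (hx1 : 1 ≤ x) (hx : x < 2 ^ m) (hj1 : 1 ≤ j)
    (hj : j ≤ period op m x) : x + j ≤ op x j := by
  induction j, hj1 using Nat.le_induction with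
  | base => rw [h.apply_one hx1 hx]
  | succ j hj1 ih =>
    have := h.strictMonoOn_apply hx1 hx ⟨hj1, by omega⟩ ⟨by omega, hj⟩ (by omega)
    have := ih (by omega)
    omega

lemma period_le_sub (h : IsLaverOp m op) (hx1 : 1 ≤ x) (hx : x < 2 ^ m) :
    period op m x ≤ 2 ^ m - x := by
  have := h.add_le_apply hx1 hx (h.one_le_period hx1 hx.le) le_rfl
  rw [h.apply_period hx1 hx.le] at this
  omega

end Basic

section Projection

variable {k : ℕ} {op : ℕ → ℕ → ℕ} {x y q u v w : ℕ}

lemma period_dvd_two_pow_of_succ (h : IsLaverOp (k + 1) op) (hx1 : 1 ≤ x)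
    (hx : x < 2 ^ (k + 1)) : period op (k + 1) x ∣ 2 ^ k :=
  dvd_two_pow_of_dvd_of_lt (h.period_dvd_two_pow hx1 hx) (by have := h.period_le_sub hx1 hx; omega)

lemma apply_residue (h : IsLaverOp (k + 1) op) (hx1 : 1 ≤ x) (hx : x < 2 ^ (k + 1))
    (hq1 : 1 ≤ q) (hq : q ≤ 2 ^ (k + 1)) : op x (residue (2 ^ k) q) = op x q := by
  have hk : 2 ^ (k + 1) = 2 * 2 ^ k := pow_succ' 2 k
  rcases eq_or_eq_add_of_modEq (residue_modEq hq1).symm hq1 (by omega) one_le_residue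
    (residue_le (Nat.two_pow_pos k)) with hq' | hq'
  · rw [← hq']
  · conv_rhs => rw [hq']
    have := residue_le (t := q) (Nat.two_pow_pos k)
    exact (h.apply_add_of_period_dvd hx1 hx one_le_residue
      (h.period_dvd_two_pow_of_succ hx1 hx) (by omega)).symm

lemma apply_modEq_apply_of_right_modEq (h : IsLaverOp (k + 1) op) (hy1 : 1 ≤ y)
    (hy : y ≤ 2 ^ (k + 1)) (hu1 : 1 ≤ u) (hu : u ≤ 2 ^ (k + 1)) (hv1 : 1 ≤ v)
    (hv : v ≤ 2 ^ (k + 1)) (huv : u ≡ v [MOD 2 ^ k]) : op y u ≡ op y v [MOD 2 ^ k] := by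
  rcases hy.lt_or_eq with hy | rfl
  · rw [← h.apply_residue hy1 hy hu1 hu, ← h.apply_residue hy1 hy hv1 hv,
      (residue_eq_residue_iff hu1 hv1).2 huv]
  · rwa [h.two_pow_apply hu1 hu, h.two_pow_apply hv1 hv]

lemma two_pow_apply_of_le (h : IsLaverOp (k + 1) op) (hq1 : 1 ≤ q) (hq : q ≤ 2 ^ k) :
    op (2 ^ k) q = 2 ^ k + q := by
  have hk : 2 ^ (k + 1) = 2 * 2 ^ k := pow_succ' 2 k
  induction q, hq1 using Nat.le_induction with
  | base => exact h.apply_one Nat.one_le_two_pow (by omega)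
  | succ q hq1 ih =>
    rw [h.apply_add_one Nat.one_le_two_pow (by omega) hq1 (by omega), ih (by omega), add_comm _ 1,
      h.apply_add_of_period_dvd (by omega) (by omega) le_rfl
        (h.period_dvd_two_pow_of_succ (by omega) (by omega)) (by omega),
      h.apply_one (by omega) (by omega), add_assoc]

lemma two_pow_apply_modEq (h : IsLaverOp (k + 1) op) (hq1 : 1 ≤ q) (hq : q ≤ 2 ^ (k + 1)) :
    op (2 ^ k) q ≡ q [MOD 2 ^ k] := by
  have hk : 2 ^ (k + 1) = 2 * 2 ^ k := pow_succ' 2 k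
  calc op (2 ^ k) q = op (2 ^ k) (residue (2 ^ k) q) :=
        (h.apply_residue Nat.one_le_two_pow (by omega) hq1 hq).symm
    _ = 2 ^ k + residue (2 ^ k) q :=
        h.two_pow_apply_of_le one_le_residue (residue_le (Nat.two_pow_pos k))
    _ ≡ residue (2 ^ k) q [MOD 2 ^ k] := Nat.add_modEq_left
    _ ≡ q [MOD 2 ^ k] := residue_modEq hq1

lemma add_two_pow_apply_modEq_of_rows_above (h : IsLaverOp (k + 1) op) (hx1 : 1 ≤ x)
    (hx : x < 2 ^ k)
    (hrows : ∀ x', x < x' → x' ≤ 2 ^ k → ∀ w, 1 ≤ w → w ≤ 2 ^ (k + 1) →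
      op (x' + 2 ^ k) w ≡ op x' w [MOD 2 ^ k])
    (hw1 : 1 ≤ w) (hw : w ≤ 2 ^ (k + 1)) : op (x + 2 ^ k) w ≡ op x w [MOD 2 ^ k] := by
  have hk : 2 ^ (k + 1) = 2 * 2 ^ k := pow_succ' 2 k
  induction w, hw1 using Nat.le_induction with
  | base =>
    rw [h.apply_one (by omega) (by omega), h.apply_one hx1 (by omega)]
    exact Nat.add_modEq_right.add_right 1
  | succ w hw1 ih =>
    set z' := op (x + 2 ^ k) w
    set z := op x w
    have hzz : z' ≡ z [MOD 2 ^ k] := ih (by omega)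
    have hz'1 : 1 ≤ z' := h.one_le_apply (by omega) (by omega) hw1 (by omega)
    have hz1 : 1 ≤ z := h.one_le_apply hx1 (by omega) hw1 (by omega)
    have hz'le : z' ≤ 2 ^ (k + 1) := h.apply_le (by omega) (by omega) hw1 (by omega)
    have hzle : z ≤ 2 ^ (k + 1) := h.apply_le hx1 (by omega) hw1 (by omega)
    have hzz' : residue (2 ^ k) z' = residue (2 ^ k) z := (residue_eq_residue_iff hz'1 hz1).2 hzz
    have hres : x < residue (2 ^ k) z' := by
      have := h.lt_apply (x := x + 2 ^ k) (by omega) (by omega) hw1 (by omega)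
      rw [residue_eq_sub (by omega) (by omega)]
      omega
    calc op (x + 2 ^ k) (w + 1) = op z' (x + 2 ^ k + 1) :=
          h.apply_add_one (by omega) (by omega) hw1 (by omega)
      _ ≡ op z' (x + 1) [MOD 2 ^ k] := h.apply_modEq_apply_of_right_modEq hz'1 hz'le
          (by omega) (by omega) (by omega) (by omega) (Nat.add_modEq_right.add_right 1)
      _ ≡ op (residue (2 ^ k) z') (x + 1) [MOD 2 ^ k] :=
          apply_modEq_apply_residue hrows hz'1 hz'le hres (by omega) (by omega)
      _ = op (residue (2 ^ k) z) (x + 1) := by rw [hzz']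
      _ ≡ op z (x + 1) [MOD 2 ^ k] :=
          (apply_modEq_apply_residue hrows hz1 hzle (hzz' ▸ hres) (by omega) (by omega)).symm
      _ = op x (w + 1) := (h.apply_add_one hx1 (by omega) hw1 (by omega)).symm

lemma add_two_pow_apply_modEq (h : IsLaverOp (k + 1) op) (hx1 : 1 ≤ x) (hx : x ≤ 2 ^ k)
    (hw1 : 1 ≤ w) (hw : w ≤ 2 ^ (k + 1)) : op (x + 2 ^ k) w ≡ op x w [MOD 2 ^ k] := by
  induction hi : 2 ^ k - x using Nat.strong_induction_on generalizing x w with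
  | _ i ih =>
    rcases hx.lt_or_eq with hx | rfl
    · exact h.add_two_pow_apply_modEq_of_rows_above hx1 hx
        (fun x' hxx' hx' w hw1 hw => ih _ (by omega) (by omega) hx' hw1 hw rfl) hw1 hw
    · rw [← two_mul, ← pow_succ', h.two_pow_apply hw1 hw]
      exact (h.two_pow_apply_modEq hw1 hw).symm

lemma apply_modEq_apply_of_left_modEq (h : IsLaverOp (k + 1) op) (hx1 : 1 ≤ x)
    (hx : x ≤ 2 ^ (k + 1)) (hy1 : 1 ≤ y) (hy : y ≤ 2 ^ (k + 1)) (hxy : x ≡ y [MOD 2 ^ k])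
    (hw1 : 1 ≤ w) (hw : w ≤ 2 ^ (k + 1)) : op x w ≡ op y w [MOD 2 ^ k] := by
  have hrows : ∀ x', 0 < x' → x' ≤ 2 ^ k → ∀ w, 1 ≤ w → w ≤ 2 ^ (k + 1) →
      op (x' + 2 ^ k) w ≡ op x' w [MOD 2 ^ k] :=
    fun x' hx' hx'k w hw1 hw => h.add_two_pow_apply_modEq hx' hx'k hw1 hw
  calc op x w ≡ op (residue (2 ^ k) x) w [MOD 2 ^ k] :=
        apply_modEq_apply_residue hrows hx1 hx one_le_residue hw1 hw
    _ = op (residue (2 ^ k) y) w := by rw [(residue_eq_residue_iff hx1 hy1).2 hxy]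
    _ ≡ op y w [MOD 2 ^ k] := (apply_modEq_apply_residue hrows hy1 hy one_le_residue hw1 hw).symm

theorem quot (h : IsLaverOp (k + 1) op) : IsLaverOp k (quotOp k op) := by
  have hk : 2 ^ (k + 1) = 2 * 2 ^ k := pow_succ' 2 k
  refine ⟨fun x y _ _ _ _ => ⟨one_le_residue, residue_le (Nat.two_pow_pos k)⟩,
    fun x hx1 hx => ?_, ?_, fun x y hx1 hx hy1 hy => ?_⟩
  · have : x < 2 ^ (k + 1) := by omega
    rw [Laver.quotOp, h.apply_one hx1 this, residue_of_le (M := 2 ^ k) (t := x + 1) (by omega) hx]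
  · have := Nat.one_le_two_pow (n := k)
    rw [Laver.quotOp, h.apply_one this (by omega),
      residue_eq_sub (M := 2 ^ k) (t := 2 ^ k + 1) (by omega) (by omega),
      Nat.add_sub_cancel_left]
  · have hxy1 := h.one_le_apply hx1 (by omega) hy1 (by omega)
    have hx11 := h.one_le_apply hx1 (by omega) le_rfl (by omega)
    have hr1 := residue_le (t := op y 1) (Nat.two_pow_pos k)
    have hr2 := residue_le (t := op x y) (Nat.two_pow_pos k)
    have hr3 := residue_le (t := op x 1) (Nat.two_pow_pos k)
    simp only [Laver.quotOp]
    rw [residue_eq_residue_iff (h.one_le_apply hx1 (by omega) one_le_residue (by omega))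
      (h.one_le_apply one_le_residue (by omega) one_le_residue (by omega))]
    calc op x (residue (2 ^ k) (op y 1))
        = op x (op y 1) := h.apply_residue hx1 (by omega) (h.one_le_apply hy1 (by omega) le_rfl
          (by omega)) (h.apply_le hy1 (by omega) le_rfl (by omega))
      _ = op (op x y) (op x 1) := h.apply_apply_one hx1 (by omega) hy1 (by omega)
      _ ≡ op (residue (2 ^ k) (op x y)) (op x 1) [MOD 2 ^ k] :=
          h.apply_modEq_apply_of_left_modEq hxy1 (h.apply_le hx1 (by omega) hy1 (by omega))
            one_le_residue (by omega) (residue_modEq hxy1).symm hx11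
            (h.apply_le hx1 (by omega) le_rfl (by omega))
      _ = op (residue (2 ^ k) (op x y)) (residue (2 ^ k) (op x 1)) :=
          (h.apply_residue one_le_residue (by omega) hx11
            (h.apply_le hx1 (by omega) le_rfl (by omega))).symm

lemma quotOp_residue_eq_self_iff (h : IsLaverOp (k + 1) op) (hx1 : 1 ≤ x) (hx : x ≤ 2 ^ (k + 1))
    (hw1 : 1 ≤ w) (hw : w ≤ 2 ^ k) :
    quotOp k op (residue (2 ^ k) x) w = w ↔ op x w ≡ w [MOD 2 ^ k] := by
  have hk : 2 ^ (k + 1) = 2 * 2 ^ k := pow_succ' 2 k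
  have hres := residue_le (t := x) (Nat.two_pow_pos k)
  have hcong : op x w ≡ op (residue (2 ^ k) x) w [MOD 2 ^ k] :=
    h.apply_modEq_apply_of_left_modEq hx1 hx one_le_residue (by omega) (residue_modEq hx1).symm
      hw1 (by omega)
  rw [Laver.quotOp, residue_eq_iff_modEq (h.one_le_apply one_le_residue (by omega) hw1 (by omega))
    hw1 hw]
  exact ⟨hcong.trans, hcong.symm.trans⟩

lemma period_le_two_mul_period_quotOp (h : IsLaverOp (k + 1) op) (hx1 : 1 ≤ x) (hx : x < 2 ^ k) :
    period op (k + 1) x ≤ 2 * period (quotOp k op) k x := by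
  have hk : 2 ^ (k + 1) = 2 * 2 ^ k := pow_succ' 2 k
  have hq := h.quot
  set ρ := period (quotOp k op) k x
  have hρ1 : 1 ≤ ρ := hq.one_le_period hx1 hx.le
  have hρ : ρ ≤ 2 ^ k - x := hq.period_le_sub hx1 hx
  by_contra! hlt
  have hP := Nat.le_of_dvd (Nat.two_pow_pos k) (h.period_dvd_two_pow_of_succ hx1 (by omega))
  -- `x * ρ` and `x * 2ρ` are `≡ 0 (mod 2^k)` but below the period, so both equal `2^k`
  have hmul : ∀ c, 1 ≤ c → c ≤ 2 → op x (c * ρ) = 2 ^ k := by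
    intro c hc1 hc2
    have hcρ : 1 ≤ c * ρ := Nat.one_le_iff_ne_zero.2 (by positivity)
    have hcρ' : c * ρ < period op (k + 1) x := by interval_cases c <;> omega
    have htop : quotOp k op x (c * ρ) = 2 ^ k :=
      (hq.apply_eq_two_pow_iff hx1 hx hcρ (by omega)).2 (dvd_mul_left _ _)
    have hmod : op x (c * ρ) ≡ 2 ^ k [MOD 2 ^ k] :=
      (residue_eq_iff_modEq (h.one_le_apply hx1 (by omega) hcρ (by omega)) Nat.one_le_two_pow
        le_rfl).1 htop
    rcases eq_or_eq_add_of_modEq hmod (h.one_le_apply hx1 (by omega) hcρ (by omega))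
      (by have := h.apply_le hx1 (by omega) hcρ (by omega); omega) Nat.one_le_two_pow le_rfl
      with he | he
    · exact he
    · exact absurd (he.trans (by omega)) (apply_ne_two_pow_of_lt_period hcρ hcρ')
  have hmono := h.strictMonoOn_apply hx1 (by omega) (a := 1 * ρ) (b := 2 * ρ)
    ⟨by omega, by omega⟩ ⟨by omega, by omega⟩ (by omega)
  rw [hmul 1 le_rfl (by norm_num), hmul 2 (by norm_num) le_rfl] at hmono
  exact hmono.false

lemma period_dvd_two_pow_of_sub_lt (h : IsLaverOp (k + 1) op) (hx1 : 1 ≤ x) (hx : x < 2 ^ k)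
    {d : ℕ} (hd : 2 ^ k - x < 2 ^ d) : period op (k + 1) x ∣ 2 ^ d := by
  refine dvd_two_pow_of_dvd_of_lt (h.period_dvd_two_pow hx1 (by rw [pow_succ]; omega)) ?_
  have := h.period_le_two_mul_period_quotOp hx1 hx
  have := h.quot.period_le_sub hx1 hx
  rw [pow_succ]
  omega

end Projection

variable {n : ℕ} {op : ℕ → ℕ → ℕ} {p q w d : ℕ}

lemma apply_eq_add_two_pow (h : IsLaverOp (n + 1) op) (hp1 : 1 ≤ p) (hp : p < 2 ^ (n + 1))
    (hd : 2 ^ d ∣ p)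
    (hfix : ∀ w, 2 ^ n - 2 ^ d < w → w ≤ 2 ^ n → op p w ≡ w [MOD 2 ^ n])
    (hw : 2 ^ n - 2 ^ d < w) (hw' : w ≤ 2 ^ n) : op p w = w + 2 ^ n := by
  have hn : 2 ^ (n + 1) = 2 * 2 ^ n := pow_succ' 2 n
  induction hi : 2 ^ n - w generalizing w with
  | zero =>
    obtain rfl : w = 2 ^ n := by omega
    rw [← two_mul, ← hn, h.apply_eq_two_pow_iff hp1 hp Nat.one_le_two_pow (by omega)]
    exact h.period_dvd_two_pow_of_succ hp1 hp
  | succ i ih =>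
    have hnext : op p (w + 1) = w + 1 + 2 ^ n := ih (by omega) (by omega) (by omega)
    have hw1 : 1 ≤ w := by omega
    rcases eq_or_eq_add_of_modEq (hfix w hw hw') (h.one_le_apply hp1 hp.le hw1 (by omega))
      (by have := h.apply_le hp1 hp.le hw1 (by omega); omega) hw1 hw' with hpw | hpw
    · -- `p * (w + 1) = (p * w) * (p + 1) = w * (p + 1) = w * 1`: the period of row `w` divides `p`
      have hπ := (h.period_dvd_two_pow_of_sub_lt hw1 (by omega) (by omega)).trans hd
      rw [h.apply_add_one hp1 hp hw1 (by omega), hpw, add_comm p 1,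
        h.apply_add_of_period_dvd hw1 (by omega) le_rfl hπ (by omega),
        h.apply_one hw1 (by omega)] at hnext
      omega
    · exact hpw

lemma apply_eq_self_iff_of_modEq (h : IsLaverOp (n + 1) op) (hp1 : 1 ≤ p) (hp : p < 2 ^ (n + 1))
    (hd : 2 ^ d ∣ p)
    (hfix : ∀ w, 1 ≤ w → w ≤ 2 ^ n → (op p w ≡ w [MOD 2 ^ n] ↔ 2 ^ n - 2 ^ d < w))
    (hq1 : 1 ≤ q) (hq : q ≤ 2 ^ (n + 1)) : op p q = q ↔ 2 ^ (n + 1) - 2 ^ d < q := by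
  have hn : 2 ^ (n + 1) = 2 * 2 ^ n := pow_succ' 2 n
  have hdn : 2 ^ d ≤ 2 ^ n := Nat.pow_le_pow_right two_pos <| Nat.lt_succ_iff.1 <|
    (Nat.pow_lt_pow_iff_right one_lt_two).1 ((Nat.le_of_dvd (by omega) hd).trans_lt hp)
  have hshift : ∀ w, 2 ^ n - 2 ^ d < w → w ≤ 2 ^ n → op p w = w + 2 ^ n :=
    fun w hw hw' => h.apply_eq_add_two_pow hp1 hp hd
      (fun w hw hw' => (hfix w (by omega) hw').2 hw) hw hw'
  have hr1 : 1 ≤ residue (2 ^ n) q := one_le_residue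
  have hr : residue (2 ^ n) q ≤ 2 ^ n := residue_le (Nat.two_pow_pos n)
  have hpr := h.apply_residue hp1 hp hq1 hq
  have hqr := eq_or_eq_add_of_modEq (residue_modEq hq1).symm hq1 (by omega) hr1 hr
  constructor
  · intro hpq
    have hrfix := (hfix _ hr1 hr).1 (by rw [hpr, hpq]; exact (residue_modEq hq1).symm)
    have := hshift _ hrfix hr
    omega
  · intro hq'
    rw [← hpr, hshift _ (by omega) hr]
    omega

theorem apply_eq_self_iff {m : ℕ} (h : IsLaverOp m op) (hp1 : 1 ≤ p) (hp : p ≤ 2 ^ m)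
    (hd : 2 ^ d ∣ p) (hd' : ¬ 2 ^ (d + 1) ∣ p) (hq1 : 1 ≤ q) (hq : q ≤ 2 ^ m) :
    op p q = q ↔ 2 ^ m - 2 ^ d < q := by
  induction m generalizing op p q with
  | zero =>
    obtain rfl : p = 2 ^ 0 := by rw [pow_zero] at hp ⊢; omega
    exact iff_of_true (h.two_pow_apply hq1 hq) (two_pow_sub_two_pow_lt hd' hq1)
  | succ n ih =>
    rcases hp.lt_or_eq with hp | rfl
    · refine h.apply_eq_self_iff_of_modEq hp1 hp hd (fun w hw1 hw => ?_) hq1 hq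
      have hpb := two_pow_dvd_residue_and_not_dvd hp1 hp hd hd'
      rw [← h.quotOp_residue_eq_self_iff hp1 hp.le hw1 hw]
      exact ih h.quot one_le_residue (residue_le (Nat.two_pow_pos n)) hpb.1 hpb.2 hw1 hw
    · exact iff_of_true (h.two_pow_apply hq1 hq) (two_pow_sub_two_pow_lt hd' hq1)

end IsLaverOp

/-- If `2^d` exactly divides `p`, then `p *_n q = q` holds exactly for
`2^n − 2^d < q ≤ 2^n`; in particular, for `n ≥ 1` and `q ≤ 2^(n-1)`,
`p *_n q = q` forces `p = 2^n`. -/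
theorem laver_fixed_points (n : ℕ) (op : ℕ → ℕ → ℕ) (h : IsLaverOp n op)
    (p : ℕ) (hp1 : 1 ≤ p) (hp2 : p ≤ 2 ^ n)
    (d : ℕ) (hd : 2 ^ d ∣ p) (hd' : ¬ 2 ^ (d + 1) ∣ p) :
    (∀ q, 2 ^ n - 2 ^ d < q → q ≤ 2 ^ n → op p q = q) ∧
    (∀ q, 1 ≤ q → q ≤ 2 ^ n - 2 ^ d → op p q ≠ q) ∧
    (1 ≤ n → ∀ q, 1 ≤ q → q ≤ 2 ^ (n - 1) → op p q = q → p = 2 ^ n) := by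
  have key : ∀ q, 1 ≤ q → q ≤ 2 ^ n → (op p q = q ↔ 2 ^ n - 2 ^ d < q) :=
    fun q hq1 hq => h.apply_eq_self_iff hp1 hp2 hd hd' hq1 hq
  refine ⟨fun q hq hq' => (key q (by omega) hq').2 hq, fun q hq1 hq hpq => ?_,
    fun hn q hq1 hq hpq => ?_⟩
  · have := (key q hq1 (by omega)).1 hpq
    omega
  · have hn' : 2 ^ n = 2 * 2 ^ (n - 1) := by rw [← pow_succ', Nat.sub_add_cancel hn]
    have hlt : 2 ^ (n - 1) < 2 ^ d := by
      have := (key q hq1 (by omega)).1 hpq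
      omega
    have hnd : n ≤ d := by
      have := (Nat.pow_lt_pow_iff_right one_lt_two).1 hlt
      omega
    have := Nat.pow_le_pow_right two_pos hnd
    have := Nat.le_of_dvd (by omega) hd
    omega
end
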